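/- For r₁, r₂ > 0, the closed ball of S(q₁,r₁) is contained in the closure of the exterior of S(q₂,r₂) (i.e., ‖q₁ - q₂‖ ≥ r₁ + r₂) if and only if ⟨σ_{q₁,r₁}, σ_{q₂,-r₂}⟩ ≤ 0. -/
import Mathlib


open RealInnerProductSpace

/-- Lie inner product on ℝ^{d+3} = ℝ × ℝ × ℝ^d × ℝ. -/
noncomputable def lieP {d : ℕ} (x y : ℝ × ℝ × EuclideanSpace ℝ (Fin d) × ℝ) : ℝ :=
  -(x.1 * y.1) + x.2.1 * y.2.1 + ⟪x.2.2.1, y.2.2.1⟫ - x.2.2.2 * y.2.2.2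

/-- Standard Lie coordinates of the oriented sphere with center q and signed radius r. -/
noncomputable def sigmaL {d : ℕ} (q : EuclideanSpace ℝ (Fin d)) (r : ℝ) :
    ℝ × ℝ × EuclideanSpace ℝ (Fin d) × ℝ :=
  ((1 + ‖q‖ ^ 2 - r ^ 2) / 2, (1 - ‖q‖ ^ 2 + r ^ 2) / 2, q, r)

/-- Standard Lie coordinates of the oriented hyperplane with unit normal n and height h. -/
noncomputable def piL {d : ℕ} (n : EuclideanSpace ℝ (Fin d)) (h : ℝ) :
    ℝ × ℝ × EuclideanSpace ℝ (Fin d) × ℝ :=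
  (h, -h, n, 1)

/-- Standard Lie coordinates of a point. -/
noncomputable def xiL {d : ℕ} (p : EuclideanSpace ℝ (Fin d)) :
    ℝ × ℝ × EuclideanSpace ℝ (Fin d) × ℝ :=
  ((1 + ‖p‖ ^ 2) / 2, (1 - ‖p‖ ^ 2) / 2, p, 0)
theorem exterior_containment_iff {d : ℕ} (q₁ q₂ : EuclideanSpace ℝ (Fin d)) (r₁ r₂ : ℝ)
    (hr₁ : 0 < r₁) (hr₂ : 0 < r₂) :
    r₁ + r₂ ≤ ‖q₁ - q₂‖ ↔ lieP (sigmaL q₁ r₁) (sigmaL q₂ (-r₂)) ≤ 0 := by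
  have hsq : ‖q₁ - q₂‖ ^ 2 = ‖q₁‖ ^ 2 - 2 * ⟪q₁, q₂⟫ + ‖q₂‖ ^ 2 :=
    norm_sub_sq_real q₁ q₂
  have hlie : lieP (sigmaL q₁ r₁) (sigmaL q₂ (-r₂)) = ((r₁ + r₂) ^ 2 - ‖q₁ - q₂‖ ^ 2) / 2 := by
    simp only [lieP, sigmaL, hsq]; ring
  rw [hlie]
  constructor
  · intro h
    nlinarith
  · intro h
    nlinarith [norm_nonneg (q₁ - q₂)]
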